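/- Let f : ℝ³ → ℝ be smooth and let λ₁, λ₂ be smooth real-valued functions depending only on the first and second coordinate respectively, with λ₃ : ℝ → ℝ depending only on the third coordinate. Define α_λ = (λ-λ₂(p₂))(λ-λ₃(p₃)) f₁ dp₁ + (λ-λ₁(p₁))(λ-λ₃(p₃)) f₂ dp₂ + (λ-λ₁(p₁))(λ-λ₂(p₂)) f₃ dp₃. Then α_λ ∧ dα_λ = 0 for all λ if and only if (λ₂(p₂)-λ₃(p₃)) f₁ f₂₃ + (λ₃(p₃)-λ₁(p₁)) f₂ f₁₃ + (λ₁(p₁)-λ₂(p₂)) f₃ f₁₂ = 0, i.e. the general equation of family (A). -/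

import Mathlib

/-- Partial derivative of a function on `ℝ³` in the `i`-th coordinate direction. -/
noncomputable def pd (i : Fin 3) (f : (Fin 3 → ℝ) → ℝ) (p : Fin 3 → ℝ) : ℝ :=
  fderiv ℝ f p (Pi.single i 1)

lemma pd_contDiff (j : Fin 3) {f : (Fin 3 → ℝ) → ℝ} (hf : ContDiff ℝ (⊤ : ℕ∞) f) :
    ContDiff ℝ (⊤ : ℕ∞) (pd j f) :=
  (hf.fderiv_right (by simp)).clm_apply contDiff_const

lemma pd_mul {g h : (Fin 3 → ℝ) → ℝ} {p : Fin 3 → ℝ}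
    (hg : DifferentiableAt ℝ g p) (hh : DifferentiableAt ℝ h p) (i : Fin 3) :
    pd i (fun x => g x * h x) p = pd i g p * h p + g p * pd i h p := by
  rw [pd, fderiv_fun_mul hg hh]
  simp [pd]
  ring

lemma pd_coord (g : ℝ → ℝ) (hg : ContDiff ℝ (⊤ : ℕ∞) g) (j i : Fin 3) (p : Fin 3 → ℝ) :
    pd i (fun x => g (x j)) p = deriv g (p j) * (Pi.single i (1:ℝ) : Fin 3 → ℝ) j := by
  have h1 : HasDerivAt g (deriv g (p j)) (p j) :=
    ((hg.differentiable (by simp)) (p j)).hasDerivAt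
  have h3 : HasFDerivAt (fun x : Fin 3 → ℝ => g (x j))
      (deriv g (p j) • (ContinuousLinearMap.proj j : (Fin 3 → ℝ) →L[ℝ] ℝ)) p :=
    h1.comp_hasFDerivAt p
      ((ContinuousLinearMap.proj (R := ℝ) (φ := fun _ : Fin 3 => ℝ) j).hasFDerivAt (x := p))
  rw [pd, h3.fderiv]
  simp [mul_comm]

lemma pd_symm {f : (Fin 3 → ℝ) → ℝ} (hf : ContDiff ℝ (⊤ : ℕ∞) f) (i j : Fin 3) (p : Fin 3 → ℝ) :
    pd i (pd j f) p = pd j (pd i f) p := by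
  have hdiff : ∀ q, DifferentiableAt ℝ (fderiv ℝ f) q :=
    fun q => ((hf.fderiv_right (m := 1) (WithTop.coe_le_coe.mpr le_top)).differentiable one_ne_zero) q
  have key : ∀ (v w : Fin 3 → ℝ) (q : Fin 3 → ℝ),
      fderiv ℝ (fun x => fderiv ℝ f x w) q v = fderiv ℝ (fderiv ℝ f) q v w := by
    intro v w q
    rw [fderiv_clm_apply (hdiff q) (differentiableAt_const w)]
    simp
  have hs : IsSymmSndFDerivAt ℝ f p :=
    (hf.contDiffAt).isSymmSndFDerivAt
      (le_trans (by simp [minSmoothness_of_isRCLikeNormedField])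
        (WithTop.coe_le_coe.mpr (le_top : (2:ℕ∞) ≤ ⊤)))
  rw [pd, pd]
  show fderiv ℝ (fun x => fderiv ℝ f x (Pi.single j 1)) p (Pi.single i 1)
      = fderiv ℝ (fun x => fderiv ℝ f x (Pi.single i 1)) p (Pi.single j 1)
  rw [key, key]
  exact hs _ _

lemma pd_const_sub {g : (Fin 3 → ℝ) → ℝ} {p : Fin 3 → ℝ}
    (hg : DifferentiableAt ℝ g p) (c : ℝ) (i : Fin 3) :
    pd i (fun x => c - g x) p = - pd i g p := by
  have : (fun x => c - g x) = fun x => (fun _ : Fin 3 → ℝ => c) x - g x := rfl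
  rw [pd, this, fderiv_fun_sub (differentiableAt_const c) hg]
  simp [pd]

lemma pd_ABC (u v : ℝ → ℝ) (hu : ContDiff ℝ (⊤ : ℕ∞) u) (hv : ContDiff ℝ (⊤ : ℕ∞) v)
    (ju jv k i : Fin 3) (l : ℝ) {f : (Fin 3 → ℝ) → ℝ} (hf : ContDiff ℝ (⊤ : ℕ∞) f) (p : Fin 3 → ℝ) :
    pd i (fun x => (l - u (x ju)) * (l - v (x jv)) * pd k f x) p =
      (-(deriv u (p ju) * (Pi.single i (1:ℝ) : Fin 3 → ℝ) ju) * (l - v (p jv))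
        + (l - u (p ju)) * -(deriv v (p jv) * (Pi.single i (1:ℝ) : Fin 3 → ℝ) jv)) * pd k f p
      + (l - u (p ju)) * (l - v (p jv)) * pd i (pd k f) p := by
  have hU : ContDiff ℝ (⊤ : ℕ∞) (fun x : Fin 3 → ℝ => l - u (x ju)) :=
    contDiff_const.sub (hu.comp (ContinuousLinearMap.proj (R := ℝ)
      (φ := fun _ : Fin 3 => ℝ) ju).contDiff)
  have hV : ContDiff ℝ (⊤ : ℕ∞) (fun x : Fin 3 → ℝ => l - v (x jv)) :=
    contDiff_const.sub (hv.comp (ContinuousLinearMap.proj (R := ℝ)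
      (φ := fun _ : Fin 3 => ℝ) jv).contDiff)
  have e1 := pd_mul (g := fun x => (l - u (x ju)) * (l - v (x jv))) (h := pd k f)
    ((hU.differentiable (by simp) p).mul (hV.differentiable (by simp) p))
    ((pd_contDiff k hf).differentiable (by simp) p) i
  have e2 := pd_mul (g := fun x => l - u (x ju)) (h := fun x => l - v (x jv))
    (hU.differentiable (by simp) p) (hV.differentiable (by simp) p) i
  have e3 : pd i (fun x : Fin 3 → ℝ => l - u (x ju)) p
      = -(deriv u (p ju) * (Pi.single i (1:ℝ) : Fin 3 → ℝ) ju) := by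
    have hd : DifferentiableAt ℝ (fun x : Fin 3 → ℝ => u (x ju)) p :=
      ((hu.differentiable (by simp)) _).comp p
        ((ContinuousLinearMap.proj (R := ℝ) (φ := fun _ : Fin 3 => ℝ) ju).differentiable p)
    rw [pd_const_sub hd l i, pd_coord u hu ju i p]
  have e4 : pd i (fun x : Fin 3 → ℝ => l - v (x jv)) p
      = -(deriv v (p jv) * (Pi.single i (1:ℝ) : Fin 3 → ℝ) jv) := by
    have hd : DifferentiableAt ℝ (fun x : Fin 3 → ℝ => v (x jv)) p :=
      ((hv.differentiable (by simp)) _).comp p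
        ((ContinuousLinearMap.proj (R := ℝ) (φ := fun _ : Fin 3 => ℝ) jv).differentiable p)
    rw [pd_const_sub hd l i, pd_coord v hv jv i p]
  rw [e1, e2, e3, e4]

lemma keyeq (f : (Fin 3 → ℝ) → ℝ) (hf : ContDiff ℝ (⊤ : ℕ∞) f) (l1 l2 l3 : ℝ → ℝ)
    (hl1 : ContDiff ℝ (⊤ : ℕ∞) l1) (hl2 : ContDiff ℝ (⊤ : ℕ∞) l2) (hl3 : ContDiff ℝ (⊤ : ℕ∞) l3)
    (l : ℝ) (p : Fin 3 → ℝ) :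
    (l - l2 (p 1)) * (l - l3 (p 2)) * pd 0 f p *
        (pd 1 (fun x => (l - l1 (x 0)) * (l - l2 (x 1)) * pd 2 f x) p
          - pd 2 (fun x => (l - l1 (x 0)) * (l - l3 (x 2)) * pd 1 f x) p)
      - (l - l1 (p 0)) * (l - l3 (p 2)) * pd 1 f p *
        (pd 0 (fun x => (l - l1 (x 0)) * (l - l2 (x 1)) * pd 2 f x) p
          - pd 2 (fun x => (l - l2 (x 1)) * (l - l3 (x 2)) * pd 0 f x) p)
      + (l - l1 (p 0)) * (l - l2 (p 1)) * pd 2 f p *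
        (pd 0 (fun x => (l - l1 (x 0)) * (l - l3 (x 2)) * pd 1 f x) p
          - pd 1 (fun x => (l - l2 (x 1)) * (l - l3 (x 2)) * pd 0 f x) p)
    = -((l - l1 (p 0)) * (l - l2 (p 1)) * (l - l3 (p 2))) *
      ((l2 (p 1) - l3 (p 2)) * pd 0 f p * pd 1 (pd 2 f) p
        + (l3 (p 2) - l1 (p 0)) * pd 1 f p * pd 0 (pd 2 f) p
        + (l1 (p 0) - l2 (p 1)) * pd 2 f p * pd 0 (pd 1 f) p) := by
  rw [pd_ABC l1 l2 hl1 hl2 0 1 2 1 l hf p,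
      pd_ABC l1 l3 hl1 hl3 0 2 1 2 l hf p,
      pd_ABC l1 l2 hl1 hl2 0 1 2 0 l hf p,
      pd_ABC l2 l3 hl2 hl3 1 2 0 2 l hf p,
      pd_ABC l1 l3 hl1 hl3 0 2 1 0 l hf p,
      pd_ABC l2 l3 hl2 hl3 1 2 0 1 l hf p]
  rw [pd_symm hf 2 1 p, pd_symm hf 2 0 p, pd_symm hf 1 0 p]
  have e01 : ((0:Fin 3) = 1) = False := by decide
  have e02 : ((0:Fin 3) = 2) = False := by decide
  have e10 : ((1:Fin 3) = 0) = False := by decide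
  have e12 : ((1:Fin 3) = 2) = False := by decide
  have e20 : ((2:Fin 3) = 0) = False := by decide
  have e21 : ((2:Fin 3) = 1) = False := by decide
  simp only [Pi.single_apply, e01, e02, e10, e12, e20, e21, if_false, if_true,
    eq_self_iff_true, mul_zero, zero_mul, mul_one, one_mul, neg_zero, add_zero, zero_add]
  ring

/-- With `λ₁, λ₂, λ₃` smooth functions of the first, second and third coordinate
respectively, the integrability condition `α_λ ∧ dα_λ = 0` for all `λ` for
`α_λ = (λ-λ₂(p₂))(λ-λ₃(p₃)) f₁ dp₁ + (λ-λ₁(p₁))(λ-λ₃(p₃)) f₂ dp₂ + (λ-λ₁(p₁))(λ-λ₂(p₂)) f₃ dp₃`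
holds iff `f` satisfies the general equation of family (A). -/
theorem familyA_integrability (f : (Fin 3 → ℝ) → ℝ) (hf : ContDiff ℝ (⊤ : ℕ∞) f)
    (l1 l2 l3 : ℝ → ℝ)
    (hl1 : ContDiff ℝ (⊤ : ℕ∞) l1) (hl2 : ContDiff ℝ (⊤ : ℕ∞) l2) (hl3 : ContDiff ℝ (⊤ : ℕ∞) l3) :
    (∀ (l : ℝ) (p : Fin 3 → ℝ),
      let A : (Fin 3 → ℝ) → ℝ := fun x => (l - l2 (x 1)) * (l - l3 (x 2)) * pd 0 f x
      let B : (Fin 3 → ℝ) → ℝ := fun x => (l - l1 (x 0)) * (l - l3 (x 2)) * pd 1 f x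
      let C : (Fin 3 → ℝ) → ℝ := fun x => (l - l1 (x 0)) * (l - l2 (x 1)) * pd 2 f x
      -- coefficient of `dp₁ ∧ dp₂ ∧ dp₃` in `α_λ ∧ dα_λ`
      A p * (pd 1 C p - pd 2 B p)
        - B p * (pd 0 C p - pd 2 A p)
        + C p * (pd 0 B p - pd 1 A p) = 0)
    ↔ (∀ p : Fin 3 → ℝ,
        (l2 (p 1) - l3 (p 2)) * pd 0 f p * pd 1 (pd 2 f) p
          + (l3 (p 2) - l1 (p 0)) * pd 1 f p * pd 0 (pd 2 f) p
          + (l1 (p 0) - l2 (p 1)) * pd 2 f p * pd 0 (pd 1 f) p = 0) := by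
  constructor
  · intro h p
    set l : ℝ := max (l1 (p 0)) (max (l2 (p 1)) (l3 (p 2))) + 1 with hl
    have h1 : l - l1 (p 0) > 0 := by
      have := le_max_left (l1 (p 0)) (max (l2 (p 1)) (l3 (p 2))); simp [hl]; linarith
    have h2 : l - l2 (p 1) > 0 := by
      have := (le_max_left (l2 (p 1)) (l3 (p 2))).trans
        (le_max_right (l1 (p 0)) (max (l2 (p 1)) (l3 (p 2)))); simp [hl]; linarith
    have h3 : l - l3 (p 2) > 0 := by
      have := (le_max_right (l2 (p 1)) (l3 (p 2))).trans
        (le_max_right (l1 (p 0)) (max (l2 (p 1)) (l3 (p 2)))); simp [hl]; linarith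
    have h0 := h l p
    simp only at h0
    rw [keyeq f hf l1 l2 l3 hl1 hl2 hl3 l p] at h0
    have hne : -((l - l1 (p 0)) * (l - l2 (p 1)) * (l - l3 (p 2))) ≠ 0 := by
      have : (l - l1 (p 0)) * (l - l2 (p 1)) * (l - l3 (p 2)) > 0 := by positivity
      linarith
    exact (mul_eq_zero.mp h0).resolve_left hne
  · intro h l p
    simp only
    rw [keyeq f hf l1 l2 l3 hl1 hl2 hl3 l p, h p, mul_zero]
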